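/- arXiv:2410.16982 — 3 statements merged into one kernel-verified Lean document; each statement's English description precedes it below -/
import Mathlib

section
/- For every n ∈ ℕ and every pair of indices α, β ∈ 𝕀 ∪ 𝕀_D, the matrices w_α and v_β satisfy ⟨w_α, v_β⟩ = δ_{α,β} (equal to 1 if α = β and 0 otherwise); that is, the family {v_α}_{α ∈ 𝕀 ∪ 𝕀_D} is a dual (bi-orthogonal) basis to the family {w_α}_{α ∈ 𝕀 ∪ 𝕀_D} with respect to the Frobenius inner product on symmetric matrices. -/
/-!
All matrices involved are combinations of rank-one matrices, and
`⟨x yᵀ, u vᵀ⟩ = (x ⬝ u) (y ⬝ v)`. Since `𝟙 ⬝ a_k = 0`, the pairings of `w_{(i,i)}` with the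
`a aᵀ` terms vanish. Writing `w_{(i,j)} = d dᵀ` with `d = e_i - e_j`, we have `d ⬝ 𝟙 = 0`,
so `d ⬝ a_k = d ⬝ e_k = d_k`, and every pairing becomes a product of Kronecker deltas.
-/

namespace EDG

open Matrix

/-- Frobenius (trace) inner product on real `n × n` matrices: `⟨A, B⟩ = tr (Aᵀ B)`. -/
noncomputable def frob {n : ℕ} (A B : Matrix (Fin n) (Fin n) ℝ) : ℝ :=
  Matrix.trace (Aᵀ * B)

/-- Frobenius norm. -/
noncomputable def frobNorm {n : ℕ} (A : Matrix (Fin n) (Fin n) ℝ) : ℝ :=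
  Real.sqrt (frob A A)

/-- The `i`-th standard basis vector of `ℝⁿ`. -/
def eV (n : ℕ) (i : Fin n) : Fin n → ℝ := Pi.single i 1

/-- The all-ones vector of `ℝⁿ`. -/
def onesV (n : ℕ) : Fin n → ℝ := fun _ => 1

/-- `a_i = e_i − (1/n) 𝟙`. -/
noncomputable def aV (n : ℕ) (i : Fin n) : Fin n → ℝ :=
  eV n i - ((n : ℝ))⁻¹ • onesV n

/-- `w_{(i,j)} = e_i e_iᵀ + e_j e_jᵀ − e_i e_jᵀ − e_j e_iᵀ` (for `i < j`). -/
noncomputable def wOff (n : ℕ) (i j : Fin n) : Matrix (Fin n) (Fin n) ℝ :=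
  vecMulVec (eV n i) (eV n i) + vecMulVec (eV n j) (eV n j)
    - vecMulVec (eV n i) (eV n j) - vecMulVec (eV n j) (eV n i)

/-- `w_{(i,i)} = (1/2)(e_i 𝟙ᵀ + 𝟙 e_iᵀ)`. -/
noncomputable def wDiag (n : ℕ) (i : Fin n) : Matrix (Fin n) (Fin n) ℝ :=
  ((2 : ℝ))⁻¹ • (vecMulVec (eV n i) (onesV n) + vecMulVec (onesV n) (eV n i))

/-- `v_{(i,j)} = −(1/2)(a_i a_jᵀ + a_j a_iᵀ)` (for `i < j`). -/
noncomputable def vOff (n : ℕ) (i j : Fin n) : Matrix (Fin n) (Fin n) ℝ :=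
  (-((2 : ℝ))⁻¹) • (vecMulVec (aV n i) (aV n j) + vecMulVec (aV n j) (aV n i))

/-- `v_{(i,i)} = e_i e_iᵀ − a_i a_iᵀ`. -/
noncomputable def vDiag (n : ℕ) (i : Fin n) : Matrix (Fin n) (Fin n) ℝ :=
  vecMulVec (eV n i) (eV n i) - vecMulVec (aV n i) (aV n i)
/-- Combined basis element `w_α` for `α = (i,j)` with `i ≤ j`. -/
noncomputable def wB (n : ℕ) (i j : Fin n) : Matrix (Fin n) (Fin n) ℝ :=
  if i = j then wDiag n i else wOff n i j

/-- Combined dual basis element `v_α` for `α = (i,j)` with `i ≤ j`. -/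
noncomputable def vB (n : ℕ) (i j : Fin n) : Matrix (Fin n) (Fin n) ℝ :=
  if i = j then vDiag n i else vOff n i j

section Frobenius

variable {n : ℕ} (A B C : Matrix (Fin n) (Fin n) ℝ)

lemma frob_add_left : frob (A + B) C = frob A C + frob B C := by
  simp [frob, add_mul]

lemma frob_smul_left (c : ℝ) : frob (c • A) C = c * frob A C := by
  simp [frob]

lemma frob_add_right : frob A (B + C) = frob A B + frob A C := by
  simp [frob, mul_add]

lemma frob_sub_right : frob A (B - C) = frob A B - frob A C := by
  simp [frob, mul_sub]

lemma frob_smul_right (c : ℝ) : frob A (c • B) = c * frob A B := by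
  simp [frob]

lemma frob_vecMulVec (x y u v : Fin n → ℝ) :
    frob (vecMulVec x y) (vecMulVec u v) = (x ⬝ᵥ u) * (y ⬝ᵥ v) := by
  rw [frob, transpose_vecMulVec, vecMulVec_mul_vecMulVec, trace_vecMulVec, dotProduct_smul,
    smul_eq_mul, mul_comm]

end Frobenius

lemma eV_dotProduct {n : ℕ} (i : Fin n) (x : Fin n → ℝ) : eV n i ⬝ᵥ x = x i := by
  simp [eV, single_dotProduct]

lemma dotProduct_eV {n : ℕ} (x : Fin n → ℝ) (i : Fin n) : x ⬝ᵥ eV n i = x i := by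
  simp [eV, dotProduct_single]

lemma onesV_dotProduct_onesV (n : ℕ) : onesV n ⬝ᵥ onesV n = n := by
  simp [onesV, dotProduct]

lemma onesV_dotProduct_aV {n : ℕ} (k : Fin n) : onesV n ⬝ᵥ aV n k = 0 := by
  have hn : (n : ℝ) ≠ 0 := Nat.cast_ne_zero.mpr (Fin.pos k).ne'
  rw [aV, dotProduct_sub, dotProduct_smul, dotProduct_eV, onesV_dotProduct_onesV, smul_eq_mul,
    inv_mul_cancel₀ hn, onesV, sub_self]

lemma dotProduct_aV_of_dotProduct_onesV_eq_zero {n : ℕ} {x : Fin n → ℝ}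
    (hx : x ⬝ᵥ onesV n = 0) (k : Fin n) : x ⬝ᵥ aV n k = x k := by
  rw [aV, dotProduct_sub, dotProduct_smul, hx, dotProduct_eV, smul_zero, sub_zero]

lemma wOff_eq_vecMulVec {n : ℕ} (i j : Fin n) :
    wOff n i j = vecMulVec (eV n i - eV n j) (eV n i - eV n j) := by
  simp only [wOff, vecMulVec_sub, sub_vecMulVec]
  abel

lemma frob_wDiag_vecMulVec {n : ℕ} (i : Fin n) (x y : Fin n → ℝ) :
    frob (wDiag n i) (vecMulVec x y) = 2⁻¹ * (x i * (onesV n ⬝ᵥ y) + (onesV n ⬝ᵥ x) * y i) := by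
  rw [wDiag, frob_smul_left, frob_add_left, frob_vecMulVec, frob_vecMulVec, eV_dotProduct,
    eV_dotProduct]

lemma frob_wOff_vecMulVec {n : ℕ} (i j : Fin n) (x y : Fin n → ℝ) :
    frob (wOff n i j) (vecMulVec x y) = ((eV n i - eV n j) ⬝ᵥ x) * ((eV n i - eV n j) ⬝ᵥ y) := by
  rw [wOff_eq_vecMulVec, frob_vecMulVec]

lemma eV_sub_eV_dotProduct_onesV {n : ℕ} (i j : Fin n) : (eV n i - eV n j) ⬝ᵥ onesV n = 0 := by
  simp [sub_dotProduct, eV_dotProduct, onesV]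

lemma frob_wDiag_vDiag {n : ℕ} (i k : Fin n) :
    frob (wDiag n i) (vDiag n k) = if i = k then 1 else 0 := by
  rw [vDiag, frob_sub_right, frob_wDiag_vecMulVec, frob_wDiag_vecMulVec, onesV_dotProduct_aV,
    dotProduct_eV, onesV]
  simp only [eV, Pi.single_apply]
  split_ifs <;> norm_num

lemma frob_wDiag_vOff {n : ℕ} (i k l : Fin n) : frob (wDiag n i) (vOff n k l) = 0 := by
  rw [vOff, frob_smul_right, frob_add_right, frob_wDiag_vecMulVec, frob_wDiag_vecMulVec,
    onesV_dotProduct_aV, onesV_dotProduct_aV]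
  ring

lemma frob_wOff_vDiag {n : ℕ} (i j k : Fin n) : frob (wOff n i j) (vDiag n k) = 0 := by
  rw [vDiag, frob_sub_right, frob_wOff_vecMulVec, frob_wOff_vecMulVec,
    dotProduct_aV_of_dotProduct_onesV_eq_zero (eV_sub_eV_dotProduct_onesV i j), dotProduct_eV,
    sub_self]

lemma frob_wOff_vOff {n : ℕ} {i j k l : Fin n} (hij : i < j) (hkl : k < l) :
    frob (wOff n i j) (vOff n k l) = if i = k ∧ j = l then 1 else 0 := by
  have hd := dotProduct_aV_of_dotProduct_onesV_eq_zero (eV_sub_eV_dotProduct_onesV i j)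
  rw [vOff, frob_smul_right, frob_add_right, frob_wOff_vecMulVec, frob_wOff_vecMulVec, hd, hd]
  simp only [eV, Pi.sub_apply, Pi.single_apply]
  split_ifs <;> first | fin_omega | norm_num

/-- the family `{v_α}_{α ∈ 𝕀 ∪ 𝕀_D}` is bi-orthogonal (dual) to the family
`{w_α}_{α ∈ 𝕀 ∪ 𝕀_D}` w.r.t. the Frobenius inner product:
`⟨w_α, v_β⟩ = δ_{α,β}` for all `α = (i,j)`, `β = (k,l)` with `i ≤ j`, `k ≤ l`. -/
theorem dual_basis_biorthogonal (n : ℕ) (i j k l : Fin n) (hij : i ≤ j) (hkl : k ≤ l) :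
    frob (wB n i j) (vB n k l) = if (i, j) = (k, l) then 1 else 0 := by
  rcases hij.eq_or_lt with rfl | hij <;> rcases hkl.eq_or_lt with rfl | hkl
  · rw [wB, vB, if_pos rfl, if_pos rfl, frob_wDiag_vDiag]
    simp
  · rw [wB, vB, if_pos rfl, if_neg hkl.ne, frob_wDiag_vOff, if_neg (by grind)]
  · rw [wB, vB, if_neg hij.ne, if_pos rfl, frob_wOff_vDiag, if_neg (by grind)]
  · rw [wB, vB, if_neg hij.ne, if_neg hkl.ne, frob_wOff_vOff hij hkl]
    simp only [Prod.mk.injEq]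

end EDG
end

section
/- For every n ∈ ℕ and every i ∈ {1,…,n}, one has ⟨w_{(i,i)}, v_{(i,i)}⟩ = 1, and for all i ≠ j in {1,…,n}, ⟨w_{(i,i)}, v_{(j,j)}⟩ = 0. -/
namespace EDG

open Matrix

lemma frob_vmv {n : ℕ} (a b c d : Fin n → ℝ) :
    frob (vecMulVec a b) (vecMulVec c d) = (a ⬝ᵥ c) * (b ⬝ᵥ d) := by
  simp only [frob, Matrix.trace, Matrix.diag, Matrix.mul_apply, vecMulVec_apply,
    transpose_apply, dotProduct, Finset.sum_mul_sum]
  rw [Finset.sum_comm]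
  congr 1; ext i; congr 1; ext k; ring

lemma e_dot_e {n : ℕ} (i j : Fin n) : eV n i ⬝ᵥ eV n j = if i = j then 1 else 0 := by
  simp [eV, dotProduct, Pi.single_apply]
  split <;> simp_all [eq_comm]

lemma e_dot_ones {n : ℕ} (i : Fin n) : eV n i ⬝ᵥ onesV n = 1 := by
  simp [eV, onesV, dotProduct, Pi.single_apply]

lemma ones_dot_e {n : ℕ} (i : Fin n) : onesV n ⬝ᵥ eV n i = 1 := by
  simp [eV, onesV, dotProduct, Pi.single_apply]

lemma ones_dot_a {n : ℕ} (i : Fin n) : onesV n ⬝ᵥ aV n i = 0 := by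
  have hn : (0:ℝ) < n := by exact_mod_cast i.pos
  simp [aV, dotProduct, onesV, eV, Pi.single_apply, Finset.sum_ite_eq,
    mul_sub, Finset.sum_sub_distrib]
  field_simp
  norm_num

lemma e_dot_a {n : ℕ} (i j : Fin n) :
    eV n i ⬝ᵥ aV n j = (if i = j then 1 else 0) - (n : ℝ)⁻¹ := by
  simp [aV, dotProduct, eV, onesV, Pi.single_apply, mul_sub, Finset.sum_sub_distrib]
  split <;> simp_all [eq_comm]

lemma vmv_transpose {n : ℕ} (a b : Fin n → ℝ) :
    (vecMulVec a b)ᵀ = vecMulVec b a := by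
  ext i j; simp [vecMulVec_apply, mul_comm]

lemma tr_vmv' {n : ℕ} (a b c d : Fin n → ℝ) :
    Matrix.trace (vecMulVec a b * vecMulVec c d) = (b ⬝ᵥ c) * (a ⬝ᵥ d) := by
  rw [← vmv_transpose b a]; exact frob_vmv b a c d

lemma key (n : ℕ) (i j : Fin n) :
    frob (wDiag n i) (vDiag n j) = if i = j then 1 else 0 := by
  simp only [frob, wDiag, vDiag, Matrix.transpose_smul, Matrix.transpose_add,
    Matrix.smul_mul, Matrix.add_mul, Matrix.mul_sub, Matrix.trace_smul,
    Matrix.trace_add, Matrix.trace_sub, vmv_transpose, tr_vmv',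
    e_dot_e, e_dot_ones, ones_dot_e, ones_dot_a, e_dot_a]
  split <;> simp <;> ring

/-- `⟨w_{(i,i)}, v_{(i,i)}⟩ = 1` for all `i`, and
`⟨w_{(i,i)}, v_{(j,j)}⟩ = 0` for all `i ≠ j`. -/
theorem diag_biorthogonal (n : ℕ) :
    (∀ i : Fin n, frob (wDiag n i) (vDiag n i) = 1) ∧
    (∀ i j : Fin n, i ≠ j → frob (wDiag n i) (vDiag n j) = 0) := by
  constructor
  · intro i; rw [key]; simp
  · intro i j h; rw [key, if_neg h]


end EDG
end

section
/- For every n ∈ ℕ and every symmetric matrix X ∈ S_n, the dual-basis expansion identity holds: X = Σ_{α ∈ 𝕀 ∪ 𝕀_D} ⟨X, w_α⟩ v_α, and likewise X = Σ_{α ∈ 𝕀 ∪ 𝕀_D} ⟨X, v_α⟩ w_α; equivalently, the linear map X ↦ Σ_{α ∈ 𝕀 ∪ 𝕀_D} ⟨X, w_α⟩ v_α is the identity on S_n, so the families {w_α} and {v_α} each span S_n. -/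
namespace EDG

open Matrix

/-- The index set `𝕀 = {(i,j) : i < j}` of strictly upper-triangular positions. -/
abbrev Idx (n : ℕ) : Type := {p : Fin n × Fin n // p.1 < p.2}

/-- `w_α` for `α ∈ 𝕀`. -/
noncomputable def wI {n : ℕ} (α : Idx n) : Matrix (Fin n) (Fin n) ℝ :=
  wOff n α.1.1 α.1.2

/-- `v_α` for `α ∈ 𝕀`. -/
noncomputable def vI {n : ℕ} (α : Idx n) : Matrix (Fin n) (Fin n) ℝ :=
  vOff n α.1.1 α.1.2
variable {n : ℕ}

lemma eV_apply (i k : Fin n) : eV n i k = if k = i then 1 else 0 := by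
  simp [eV, Pi.single_apply]

lemma aV_eq (i k : Fin n) : aV n i k = eV n i k - (n:ℝ)⁻¹ := by
  simp [aV, onesV]

lemma sum_delta (p : Fin n) (g : Fin n → ℝ) : ∑ i, g i * (if p = i then (1:ℝ) else 0) = g p := by simp

lemma sum_delta' (p : Fin n) (g : Fin n → ℝ) : ∑ i, g i * (if i = p then (1:ℝ) else 0) = g p := by simp

lemma sum_eV_idx (p : Fin n) (g : Fin n → ℝ) : ∑ i, g i * eV n i p = g p := by
  simp_rw [eV_apply]; exact sum_delta p g

lemma sum_eV_coord (j : Fin n) (g : Fin n → ℝ) : ∑ k, g k * eV n j k = g j := by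
  simp_rw [eV_apply]; exact sum_delta' j g

lemma sum_aV_idx (p : Fin n) (g : Fin n → ℝ) :
    ∑ i, g i * aV n i p = g p - (∑ i, g i) * (n:ℝ)⁻¹ := by
  have h : ∀ i, g i * aV n i p = g i * eV n i p - g i * (n:ℝ)⁻¹ := by
    intro i; rw [aV_eq]; ring
  simp_rw [h, Finset.sum_sub_distrib, sum_eV_idx, ← Finset.sum_mul]

lemma sum_aV_coord (j : Fin n) (g : Fin n → ℝ) :
    ∑ k, g k * aV n j k = g j - (∑ k, g k) * (n:ℝ)⁻¹ := by
  have h : ∀ k, g k * aV n j k = g k * eV n j k - g k * (n:ℝ)⁻¹ := by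
    intro k; rw [aV_eq]; ring
  simp_rw [h, Finset.sum_sub_distrib, sum_eV_coord, ← Finset.sum_mul]

lemma frob_eq (X M : Matrix (Fin n) (Fin n) ℝ) : frob X M = ∑ a, ∑ b, X a b * M a b := by
  simp only [frob, Matrix.trace, Matrix.mul_apply, Matrix.diag, Matrix.transpose_apply]
  rw [Finset.sum_comm]

lemma wOff_apply (i j a b : Fin n) : wOff n i j a b
    = eV n i a * eV n i b + eV n j a * eV n j b - eV n i a * eV n j b - eV n j a * eV n i b := by
  simp [wOff, vecMulVec_apply]

lemma wDiag_apply (i a b : Fin n) : wDiag n i a b = (2:ℝ)⁻¹ * (eV n i a + eV n i b) := by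
  simp [wDiag, vecMulVec_apply, onesV]

lemma vOff_apply (i j a b : Fin n) : vOff n i j a b
    = -(2:ℝ)⁻¹ * (aV n i a * aV n j b + aV n j a * aV n i b) := by
  simp [vOff, vecMulVec_apply]

lemma vDiag_apply (i a b : Fin n) : vDiag n i a b
    = eV n i a * eV n i b - aV n i a * aV n i b := by
  simp [vDiag, vecMulVec_apply]

lemma vDiag_apply' (i a b : Fin n) : vDiag n i a b
    = (n:ℝ)⁻¹ * eV n i a + (n:ℝ)⁻¹ * eV n i b - (n:ℝ)⁻¹ * (n:ℝ)⁻¹ := by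
  rw [vDiag_apply, aV_eq, aV_eq]; ring

lemma wOff_comm (i j : Fin n) : wOff n i j = wOff n j i := by
  unfold wOff; abel

lemma vOff_comm (i j : Fin n) : vOff n i j = vOff n j i := by
  unfold vOff; rw [add_comm]

lemma wOff_self (i : Fin n) : wOff n i i = 0 := by
  unfold wOff; abel

def rowS {n : ℕ} (X : Matrix (Fin n) (Fin n) ℝ) (i : Fin n) : ℝ := ∑ j, X i j
def colS {n : ℕ} (X : Matrix (Fin n) (Fin n) ℝ) (i : Fin n) : ℝ := ∑ j, X j i
def totS {n : ℕ} (X : Matrix (Fin n) (Fin n) ℝ) : ℝ := ∑ i, ∑ j, X i j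
def trS {n : ℕ} (X : Matrix (Fin n) (Fin n) ℝ) : ℝ := ∑ i, X i i

lemma sum_rowS (X : Matrix (Fin n) (Fin n) ℝ) : ∑ i, rowS X i = totS X := rfl
lemma sum_colS (X : Matrix (Fin n) (Fin n) ℝ) : ∑ i, colS X i = totS X := by
  unfold colS totS; exact Finset.sum_comm

lemma frob_wOff (X : Matrix (Fin n) (Fin n) ℝ) (i j : Fin n) :
    frob X (wOff n i j) = X i i + X j j - X i j - X j i := by
  rw [frob_eq]
  have inner : ∀ a, ∑ b, X a b * wOff n i j a b
      = X a i * eV n i a + X a j * eV n j a - X a j * eV n i a - X a i * eV n j a := by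
    intro a
    have e : ∀ b, X a b * wOff n i j a b
        = ((X a b * eV n i b) * eV n i a + (X a b * eV n j b) * eV n j a)
          - ((X a b * eV n j b) * eV n i a + (X a b * eV n i b) * eV n j a) := by
      intro b; rw [wOff_apply]; ring
    simp_rw [e, Finset.sum_sub_distrib, Finset.sum_add_distrib, ← Finset.sum_mul,
      sum_eV_coord]
    ring
  simp_rw [inner, Finset.sum_sub_distrib, Finset.sum_add_distrib, sum_eV_coord]

lemma frob_wDiag (X : Matrix (Fin n) (Fin n) ℝ) (i : Fin n) :
    frob X (wDiag n i) = (2:ℝ)⁻¹ * (rowS X i + colS X i) := by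
  rw [frob_eq]
  have inner : ∀ a, ∑ b, X a b * wDiag n i a b
      = (2:ℝ)⁻¹ * (rowS X a * eV n i a) + (2:ℝ)⁻¹ * X a i := by
    intro a
    have e : ∀ b, X a b * wDiag n i a b
        = (2:ℝ)⁻¹ * (X a b * eV n i a) + (2:ℝ)⁻¹ * (X a b * eV n i b) := by
      intro b; rw [wDiag_apply]; ring
    simp_rw [e, Finset.sum_add_distrib, ← Finset.mul_sum, ← Finset.sum_mul, sum_eV_coord]
    rfl
  simp_rw [inner, Finset.sum_add_distrib, ← Finset.mul_sum, sum_eV_coord]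
  rw [show ∑ a, X a i = colS X i from rfl]
  ring

lemma frob_vOff (X : Matrix (Fin n) (Fin n) ℝ) (i j : Fin n) :
    frob X (vOff n i j) = -(2:ℝ)⁻¹ *
      ((X i j - rowS X i * (n:ℝ)⁻¹ - colS X j * (n:ℝ)⁻¹ + totS X * (n:ℝ)⁻¹ * (n:ℝ)⁻¹)
      + (X j i - rowS X j * (n:ℝ)⁻¹ - colS X i * (n:ℝ)⁻¹ + totS X * (n:ℝ)⁻¹ * (n:ℝ)⁻¹)) := by
  rw [frob_eq]
  have inner : ∀ a, ∑ b, X a b * vOff n i j a b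
      = (-(2:ℝ)⁻¹ * (X a j - rowS X a * (n:ℝ)⁻¹)) * aV n i a
        + (-(2:ℝ)⁻¹ * (X a i - rowS X a * (n:ℝ)⁻¹)) * aV n j a := by
    intro a
    have e : ∀ b, X a b * vOff n i j a b
        = (-(2:ℝ)⁻¹ * aV n i a) * (X a b * aV n j b)
          + (-(2:ℝ)⁻¹ * aV n j a) * (X a b * aV n i b) := by
      intro b; rw [vOff_apply]; ring
    simp_rw [e, Finset.sum_add_distrib, ← Finset.mul_sum, sum_aV_coord]
    rw [rowS]
    ring
  simp_rw [inner, Finset.sum_add_distrib, sum_aV_coord]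
  have h1 : ∀ x : Fin n, ∑ a, -(2:ℝ)⁻¹ * (X a x - rowS X a * (n:ℝ)⁻¹)
      = -(2:ℝ)⁻¹ * (colS X x - totS X * (n:ℝ)⁻¹) := by
    intro x
    have e : ∀ a, -(2:ℝ)⁻¹ * (X a x - rowS X a * (n:ℝ)⁻¹)
        = (-(2:ℝ)⁻¹) * X a x + ((2:ℝ)⁻¹ * (n:ℝ)⁻¹) * rowS X a := by
      intro a; ring
    simp_rw [e, Finset.sum_add_distrib, ← Finset.mul_sum, sum_rowS]
    rw [show ∑ a, X a x = colS X x from rfl]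
    ring
  rw [h1, h1]
  ring

lemma frob_vDiag (X : Matrix (Fin n) (Fin n) ℝ) (i : Fin n) :
    frob X (vDiag n i) = rowS X i * (n:ℝ)⁻¹ + colS X i * (n:ℝ)⁻¹
      - totS X * (n:ℝ)⁻¹ * (n:ℝ)⁻¹ := by
  rw [frob_eq]
  have inner : ∀ a, ∑ b, X a b * vDiag n i a b
      = (n:ℝ)⁻¹ * (rowS X a * eV n i a) + (n:ℝ)⁻¹ * X a i
        - ((n:ℝ)⁻¹ * (n:ℝ)⁻¹) * rowS X a := by
    intro a
    have e : ∀ b, X a b * vDiag n i a b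
        = ((n:ℝ)⁻¹ * eV n i a) * X a b + (n:ℝ)⁻¹ * (X a b * eV n i b)
          - ((n:ℝ)⁻¹ * (n:ℝ)⁻¹) * X a b := by
      intro b; rw [vDiag_apply']; ring
    simp_rw [e, Finset.sum_sub_distrib, Finset.sum_add_distrib, ← Finset.mul_sum, sum_eV_coord]
    rw [rowS]
    ring
  simp_rw [inner, Finset.sum_sub_distrib, Finset.sum_add_distrib, ← Finset.mul_sum,
    sum_eV_coord, sum_rowS]
  rw [show ∑ a, X a i = colS X i from rfl]
  ring

lemma half_sum (f : Fin n → Fin n → ℝ) (hf : ∀ i j, f i j = f j i) (hd : ∀ i, f i i = 0) :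
    ∑ α : Idx n, f α.1.1 α.1.2 = (2:ℝ)⁻¹ * ∑ i, ∑ j, f i j := by
  classical
  set S := (Finset.univ ×ˢ Finset.univ : Finset (Fin n × Fin n))
  have h1 : ∑ i, ∑ j, f i j = ∑ p ∈ S, f p.1 p.2 := by
    rw [Finset.sum_product]
  have h2 := Finset.sum_filter_add_sum_filter_not S (fun p : Fin n × Fin n => p.1 < p.2)
      (fun p => f p.1 p.2)
  have h3 := Finset.sum_filter_add_sum_filter_not
      (S.filter (fun p : Fin n × Fin n => ¬ p.1 < p.2))
      (fun p : Fin n × Fin n => p.2 < p.1) (fun p => f p.1 p.2)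
  have hdiag : ∑ p ∈ ((S.filter (fun p : Fin n × Fin n => ¬ p.1 < p.2)).filter
      (fun p : Fin n × Fin n => ¬ p.2 < p.1)), f p.1 p.2 = 0 := by
    apply Finset.sum_eq_zero
    intro p hp
    simp only [Finset.mem_filter] at hp
    have he : p.1 = p.2 := le_antisymm (not_lt.1 hp.2) (not_lt.1 hp.1.2)
    rw [he, hd]
  have hswap : ∑ p ∈ ((S.filter (fun p : Fin n × Fin n => ¬ p.1 < p.2)).filter
      (fun p : Fin n × Fin n => p.2 < p.1)), f p.1 p.2
      = ∑ p ∈ (S.filter (fun p : Fin n × Fin n => p.1 < p.2)), f p.1 p.2 := by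
    apply Finset.sum_equiv (Equiv.prodComm (Fin n) (Fin n))
    · intro p
      simp only [Finset.mem_filter, Equiv.prodComm_apply, S, Finset.mem_product,
        Finset.mem_univ, true_and, Prod.fst_swap, Prod.snd_swap]
      omega
    · intro p _
      exact hf p.1 p.2
  have hsub : ∑ α : Idx n, f α.1.1 α.1.2
      = ∑ p ∈ S.filter (fun p : Fin n × Fin n => p.1 < p.2), f p.1 p.2 := by
    exact (Finset.sum_subtype (p := fun p : Fin n × Fin n => p.1 < p.2)
      (S.filter (fun p : Fin n × Fin n => p.1 < p.2))
      (fun x => by simp [S]) (fun p => f p.1 p.2)).symm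
  rw [hsub, h1]
  linarith [h2, h3, hdiag, hswap]

lemma expand1 (hn : (n:ℝ) ≠ 0) (X : Matrix (Fin n) (Fin n) ℝ)
    (hs : ∀ a b, X a b = X b a) (p q : Fin n) :
    (∑ α : Idx n, frob X (wI α) * vI α p q)
      + (∑ i, frob X (wDiag n i) * vDiag n i p q) = X p q := by
  have hcol : ∀ i, colS X i = rowS X i := by
    intro i
    exact Finset.sum_congr rfl (fun a _ => hs a i)
  -- off-diagonal part
  have hA : (∑ α : Idx n, frob X (wI α) * vI α p q)
      = (2:ℝ)⁻¹ * ∑ i, ∑ j, frob X (wOff n i j) * vOff n i j p q := by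
    exact half_sum (fun i j => frob X (wOff n i j) * vOff n i j p q)
      (fun i j => by
        show frob X (wOff n i j) * vOff n i j p q = frob X (wOff n j i) * vOff n j i p q
        rw [wOff_comm, vOff_comm])
      (fun i => by
        show frob X (wOff n i i) * vOff n i i p q = 0
        rw [frob_wOff]; ring)
  have hinner : ∀ i, ∑ j, frob X (wOff n i j) * vOff n i j p q
      = (-(2:ℝ)⁻¹ * ((X i i + X q q - X i q - X q i)
            - ((n:ℝ) * X i i + trS X - 2 * rowS X i) * (n:ℝ)⁻¹)) * aV n i p
        + (-(2:ℝ)⁻¹ * ((X i i + X p p - X i p - X p i)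
            - ((n:ℝ) * X i i + trS X - 2 * rowS X i) * (n:ℝ)⁻¹)) * aV n i q := by
    intro i
    have e : ∀ j, frob X (wOff n i j) * vOff n i j p q
        = (-(2:ℝ)⁻¹ * aV n i p) * ((X i i + X j j - X i j - X j i) * aV n j q)
          + (-(2:ℝ)⁻¹ * aV n i q) * ((X i i + X j j - X i j - X j i) * aV n j p) := by
      intro j; rw [frob_wOff, vOff_apply]; ring
    simp_rw [e, Finset.sum_add_distrib, ← Finset.mul_sum, sum_aV_idx]
    have hC : ∑ j, (X i i + X j j - X i j - X j i)
        = (n:ℝ) * X i i + trS X - 2 * rowS X i := by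
      simp_rw [Finset.sum_sub_distrib, Finset.sum_add_distrib, Finset.sum_const,
        Finset.card_univ, Fintype.card_fin, nsmul_eq_mul]
      rw [show (∑ j, X j i) = colS X i from rfl, hcol i,
        show (∑ j, X i j) = rowS X i from rfl, show (∑ j, X j j) = trS X from rfl]
      ring
    rw [hC]
    ring
  have hSG : ∀ x : Fin n,
      (∑ i, -(2:ℝ)⁻¹ * ((X i i + X x x - X i x - X x i)
          - ((n:ℝ) * X i i + trS X - 2 * rowS X i) * (n:ℝ)⁻¹))
      = (-(2:ℝ)⁻¹ * (1 - (n:ℝ) * (n:ℝ)⁻¹)) * trS X + (2:ℝ)⁻¹ * rowS X x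
        + (2:ℝ)⁻¹ * rowS X x + (-(n:ℝ)⁻¹) * totS X
        + (n:ℝ) * (-(2:ℝ)⁻¹ * (X x x - trS X * (n:ℝ)⁻¹)) := by
    intro x
    have e : ∀ i, -(2:ℝ)⁻¹ * ((X i i + X x x - X i x - X x i)
          - ((n:ℝ) * X i i + trS X - 2 * rowS X i) * (n:ℝ)⁻¹)
        = (-(2:ℝ)⁻¹ * (1 - (n:ℝ) * (n:ℝ)⁻¹)) * X i i + (2:ℝ)⁻¹ * X i x
          + (2:ℝ)⁻¹ * X x i + (-(n:ℝ)⁻¹) * rowS X i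
          + (-(2:ℝ)⁻¹ * (X x x - trS X * (n:ℝ)⁻¹)) := by
      intro i; ring
    simp_rw [e, Finset.sum_add_distrib, ← Finset.mul_sum, Finset.sum_const,
      Finset.card_univ, Fintype.card_fin, nsmul_eq_mul, sum_rowS]
    rw [show (∑ i, X i i) = trS X from rfl, show (∑ i, X i x) = colS X x from rfl,
      hcol x, show (∑ i, X x i) = rowS X x from rfl]
    ring
  have hB : ∑ i, ∑ j, frob X (wOff n i j) * vOff n i j p q
      = ((-(2:ℝ)⁻¹ * ((X p p + X q q - X p q - X q p)
            - ((n:ℝ) * X p p + trS X - 2 * rowS X p) * (n:ℝ)⁻¹))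
          - ((-(2:ℝ)⁻¹ * (1 - (n:ℝ) * (n:ℝ)⁻¹)) * trS X + (2:ℝ)⁻¹ * rowS X q
            + (2:ℝ)⁻¹ * rowS X q + (-(n:ℝ)⁻¹) * totS X
            + (n:ℝ) * (-(2:ℝ)⁻¹ * (X q q - trS X * (n:ℝ)⁻¹))) * (n:ℝ)⁻¹)
        + ((-(2:ℝ)⁻¹ * ((X q q + X p p - X q p - X p q)
            - ((n:ℝ) * X q q + trS X - 2 * rowS X q) * (n:ℝ)⁻¹))
          - ((-(2:ℝ)⁻¹ * (1 - (n:ℝ) * (n:ℝ)⁻¹)) * trS X + (2:ℝ)⁻¹ * rowS X p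
            + (2:ℝ)⁻¹ * rowS X p + (-(n:ℝ)⁻¹) * totS X
            + (n:ℝ) * (-(2:ℝ)⁻¹ * (X p p - trS X * (n:ℝ)⁻¹))) * (n:ℝ)⁻¹) := by
    simp_rw [hinner, Finset.sum_add_distrib, sum_aV_idx]
    rw [hSG q, hSG p]
  -- diagonal part
  have hD : ∑ i, frob X (wDiag n i) * vDiag n i p q
      = (n:ℝ)⁻¹ * ((2:ℝ)⁻¹ * (rowS X p + colS X p))
        + (n:ℝ)⁻¹ * ((2:ℝ)⁻¹ * (rowS X q + colS X q))
        - ((n:ℝ)⁻¹ * (n:ℝ)⁻¹ * (2:ℝ)⁻¹) * totS X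
        - ((n:ℝ)⁻¹ * (n:ℝ)⁻¹ * (2:ℝ)⁻¹) * totS X := by
    have e : ∀ i, frob X (wDiag n i) * vDiag n i p q
        = (n:ℝ)⁻¹ * (((2:ℝ)⁻¹ * (rowS X i + colS X i)) * eV n i p)
          + (n:ℝ)⁻¹ * (((2:ℝ)⁻¹ * (rowS X i + colS X i)) * eV n i q)
          - ((n:ℝ)⁻¹ * (n:ℝ)⁻¹ * (2:ℝ)⁻¹) * rowS X i
          - ((n:ℝ)⁻¹ * (n:ℝ)⁻¹ * (2:ℝ)⁻¹) * colS X i := by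
      intro i; rw [frob_wDiag, vDiag_apply']; ring
    simp_rw [e, Finset.sum_sub_distrib, Finset.sum_add_distrib, ← Finset.mul_sum,
      sum_eV_idx, sum_rowS, sum_colS]
  rw [hA, hB, hD, hcol p, hcol q, show X q p = X p q from hs q p]
  field_simp
  ring

lemma expand2 (hn : (n:ℝ) ≠ 0) (X : Matrix (Fin n) (Fin n) ℝ)
    (hs : ∀ a b, X a b = X b a) (p q : Fin n) :
    (∑ α : Idx n, frob X (vI α) * wI α p q)
      + (∑ i, frob X (vDiag n i) * wDiag n i p q) = X p q := by
  have hcol : ∀ i, colS X i = rowS X i := by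
    intro i
    exact Finset.sum_congr rfl (fun a _ => hs a i)
  have hA : (∑ α : Idx n, frob X (vI α) * wI α p q)
      = (2:ℝ)⁻¹ * ∑ i, ∑ j, frob X (vOff n i j) * wOff n i j p q := by
    exact half_sum (fun i j => frob X (vOff n i j) * wOff n i j p q)
      (fun i j => by
        show frob X (vOff n i j) * wOff n i j p q = frob X (vOff n j i) * wOff n j i p q
        rw [wOff_comm, vOff_comm])
      (fun i => by
        show frob X (vOff n i i) * wOff n i i p q = 0
        rw [wOff_self]; simp)
  -- row sums of the dual coefficients vanish
  have hDrow : ∀ i, ∑ j, frob X (vOff n i j) = 0 := by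
    intro i
    have e : ∀ j, frob X (vOff n i j)
        = (-(2:ℝ)⁻¹) * X i j + (-(2:ℝ)⁻¹) * X j i + ((2:ℝ)⁻¹ * (n:ℝ)⁻¹) * colS X j
          + ((2:ℝ)⁻¹ * (n:ℝ)⁻¹) * rowS X j
          + ((2:ℝ)⁻¹ * (rowS X i * (n:ℝ)⁻¹ + colS X i * (n:ℝ)⁻¹
              - 2 * (totS X * (n:ℝ)⁻¹ * (n:ℝ)⁻¹))) := by
      intro j; rw [frob_vOff]; ring
    simp_rw [e, Finset.sum_add_distrib, ← Finset.mul_sum, Finset.sum_const,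
      Finset.card_univ, Fintype.card_fin, nsmul_eq_mul, sum_rowS, sum_colS]
    rw [show (∑ j, X i j) = rowS X i from rfl, show (∑ j, X j i) = colS X i from rfl]
    field_simp
    ring
  have hDcol : ∀ j, ∑ i, frob X (vOff n i j) = 0 := by
    intro j
    rw [Finset.sum_congr rfl (fun i _ => by rw [vOff_comm i j])]
    exact hDrow j
  have hinner : ∀ i, ∑ j, frob X (vOff n i j) * wOff n i j p q
      = (frob X (vOff n i p)) * eV n p q - (frob X (vOff n i q)) * eV n i p
        - (frob X (vOff n i p)) * eV n i q := by
    intro i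
    have e : ∀ j, frob X (vOff n i j) * wOff n i j p q
        = (eV n i p * eV n i q) * frob X (vOff n i j)
          + (frob X (vOff n i j) * eV n j q) * eV n j p
          - (eV n i p) * (frob X (vOff n i j) * eV n j q)
          - (eV n i q) * (frob X (vOff n i j) * eV n j p) := by
      intro j; rw [wOff_apply]; ring
    simp_rw [e, Finset.sum_sub_distrib, Finset.sum_add_distrib, ← Finset.mul_sum,
      sum_eV_idx, hDrow i]
    ring
  have hB : ∑ i, ∑ j, frob X (vOff n i j) * wOff n i j p q
      = - (frob X (vOff n q p)) - (frob X (vOff n p q)) := by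
    simp_rw [hinner, Finset.sum_sub_distrib, ← Finset.sum_mul, sum_eV_idx, hDcol p]
    ring
  have hD : ∑ i, frob X (vDiag n i) * wDiag n i p q
      = (2:ℝ)⁻¹ * frob X (vDiag n p) + (2:ℝ)⁻¹ * frob X (vDiag n q) := by
    have e : ∀ i, frob X (vDiag n i) * wDiag n i p q
        = (2:ℝ)⁻¹ * (frob X (vDiag n i) * eV n i p)
          + (2:ℝ)⁻¹ * (frob X (vDiag n i) * eV n i q) := by
      intro i; rw [wDiag_apply]; ring
    simp_rw [e, Finset.sum_add_distrib, ← Finset.mul_sum, sum_eV_idx]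
  rw [hA, hB, hD, frob_vOff, frob_vOff, frob_vDiag, frob_vDiag,
    hcol p, hcol q, show X q p = X p q from hs q p]
  field_simp
  ring



/-- dual-basis expansion. For every symmetric `X`,
`X = Σ_{α ∈ 𝕀 ∪ 𝕀_D} ⟨X, w_α⟩ v_α` and `X = Σ_{α ∈ 𝕀 ∪ 𝕀_D} ⟨X, v_α⟩ w_α`;
in particular the map `X ↦ Σ_α ⟨X, w_α⟩ v_α` is the identity on `S_n` and the
families `{w_α}` and `{v_α}` each span `S_n`. -/
theorem dual_basis_expansion (n : ℕ) (X : Matrix (Fin n) (Fin n) ℝ) (hX : X.IsSymm) :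
    (X = (∑ α : Idx n, frob X (wI α) • vI α) + ∑ i : Fin n, frob X (wDiag n i) • vDiag n i) ∧
    (X = (∑ α : Idx n, frob X (vI α) • wI α) + ∑ i : Fin n, frob X (vDiag n i) • wDiag n i) := by
  have hs : ∀ a b, X a b = X b a := fun a b => congrFun (congrFun hX b) a
  rcases eq_or_ne ((n:ℕ) : ℝ) 0 with h0 | hn
  · have hn0 : n = 0 := by exact_mod_cast h0
    subst hn0
    constructor <;> (ext p q; exact p.elim0)
  · constructor
    · ext p q
      simp only [Matrix.add_apply, Matrix.sum_apply, Matrix.smul_apply, smul_eq_mul]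
      exact (expand1 hn X hs p q).symm
    · ext p q
      simp only [Matrix.add_apply, Matrix.sum_apply, Matrix.smul_apply, smul_eq_mul]
      exact (expand2 hn X hs p q).symm

end EDG
end
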